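/- arXiv:0804.3071 — 4 statements merged into one kernel-verified Lean document; each statement's English description precedes it below -/
import Mathlib

section
/- The function P^{S,t}_{t+} defined on pairs (X,Y) with X=(x_1<⋯<x_N) ∈ 𝒳^{S,t} and Y=(y_1<⋯<y_N) ∈ 𝒳^{S,t+1} by P^{S,t}_{t+}(X,Y) = [∏_{i<j}(y_j-y_i) · ∏_{i: y_i=x_i+1}(N+S-x_i-1) · ∏_{i: y_i=x_i}(x_i+T-t-S)] / [(T-t)_N · ∏_{i<j}(x_j-x_i)] when y_i - x_i ∈ {0,1} for all i, and 0 otherwise, is a stochastic matrix: for every X ∈ 𝒳^{S,t}, the sum over Y ∈ 𝒳^{S,t+1} of P^{S,t}_{t+}(X,Y) equals 1. -/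
open Finset

/-- Pochhammer symbol (a)_n = a(a+1)⋯(a+n-1) over ℝ. -/
noncomputable def poch (a : ℝ) (n : ℕ) : ℝ := ∏ k ∈ Finset.range n, (a + k)

/-- ∏_{i<j} (f j - f i), as a real number. -/
noncomputable def pairProd {N : ℕ} (f : Fin N → ℤ) : ℝ :=
  ∏ p ∈ Finset.univ.filter (fun p : Fin N × Fin N => p.1 < p.2), ((f p.2 - f p.1 : ℤ) : ℝ)

/-- The section 𝔛^{S,t} as a Finset of ℤ. -/
noncomputable def secX (N T S t : ℕ) : Finset ℤ :=
  Finset.Icc (max 0 ((t : ℤ) + S - T)) (min ((t : ℤ) + N - 1) ((S : ℤ) + N - 1))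

/-- 𝒳^{S,t}: strictly increasing N-tuples with entries in 𝔛^{S,t}. -/
noncomputable def Xcal (N T S t : ℕ) : Finset (Fin N → ℤ) :=
  (Fintype.piFinset fun _ => secX N T S t).filter
    (fun f => ∀ i j : Fin N, i < j → f i < f j)

/-- The stochastic matrix P^{S,t}_{t+}. -/
noncomputable def Ptp (N T S t : ℕ) (X Y : Fin N → ℤ) : ℝ :=
  if ∀ i, Y i = X i ∨ Y i = X i + 1 then
    (pairProd Y *
      ∏ i, (if Y i = X i + 1 then (N : ℝ) + S - X i - 1 else (X i : ℝ) + T - t - S)) /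
      (poch ((T : ℝ) - t) N * pairProd X)
  else 0

/-!
Each particle either stays or jumps one step right, so summing the numerator of `Ptp` over
all such moves `Y` expands, by multilinearity of the determinant in its rows, into a single
determinant whose `(i, k)` entry is `(x_i + a) x_i^k + (b - x_i) (x_i + 1)^k`, with
`a = T - t - S` and `b = N + S - 1`. Column `k` is a polynomial of degree `k` in `x_i` (the
`x^(k+1)` terms cancel) with leading coefficient `a + b - k`, so the determinant
is `∏_{k<N} (T - t + N - 1 - k) = (T - t)_N` times the Vandermonde `∏_{i<j} (x_j - x_i)`.
The moves leaving `𝒳^{S,t+1}` contribute nothing: either two particles collide, killing the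
Vandermonde factor, or a particle leaves the section through an edge where its weight vanishes.
-/

section VandermondeExpansion

open Polynomial

variable {R : Type*} [CommRing R] {n : ℕ}

namespace Matrix

theorem det_of_eval_of_natDegree_le (v : Fin n → R) (p : Fin n → R[X])
    (h_deg : ∀ i, (p i).natDegree ≤ i) :
    (of fun i j => (p j).eval (v i)).det = (∏ i, (p i).coeff i) * (vandermonde v).det := by
  rw [eval_matrixOfPolynomials_eq_vandermonde_mul_matrixOfPolynomials v p h_deg, det_mul,
    det_of_isUpperTriangular (matrixOfPolynomials_blockTriangular p h_deg), mul_comm]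
  rfl

theorem sum_prod_mul_det_vandermonde {α : Type*} [DecidableEq α] (s : Fin n → Finset α)
    (f : Fin n → α → R) (g : α → R) :
    ∑ y ∈ Fintype.piFinset s, (∏ i, f i (y i)) * (vandermonde fun i => g (y i)).det =
      (of fun i k : Fin n => ∑ z ∈ s i, f i z * g z ^ (k : ℕ)).det := by
  have := (detRowAlternating (R := R) (n := Fin n)).toMultilinearMap.map_sum_finset
    (fun i z k => f i z * g z ^ (k : ℕ)) s
  convert this.symm using 1
  · exact sum_congr rfl fun y _ => (det_mul_column _ _).symm
  · congr 1; ext i k; simp [Finset.sum_apply]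

end Matrix

variable (a b : R)

noncomputable def twoPointPoly (k : ℕ) : R[X] :=
  (X + C a) * X ^ k + (C b - X) * (X + 1) ^ k

lemma twoPointPoly_eq (k : ℕ) : twoPointPoly a b k =
    X ^ (k + 1) + C a * X ^ k + C b * (X + 1) ^ k - X * (X + 1) ^ k := by
  rw [twoPointPoly]; ring

lemma eval_twoPointPoly (k : ℕ) (x : R) :
    (twoPointPoly a b k).eval x = (x + a) * x ^ k + (b - x) * (x + 1) ^ k := by
  simp [twoPointPoly]

lemma coeff_twoPointPoly_succ (k m : ℕ) :
    (twoPointPoly a b k).coeff (m + 1) =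
      (if m = k then 1 else 0) + (if m + 1 = k then a else 0) + b * (k.choose (m + 1))
        - k.choose m := by
  simp only [twoPointPoly_eq, coeff_add, coeff_sub, coeff_X_pow, coeff_C_mul,
    coeff_X_mul, coeff_X_add_one_pow]
  simp [eq_comm]

lemma natDegree_twoPointPoly_le (k : ℕ) : (twoPointPoly a b k).natDegree ≤ k := by
  refine natDegree_le_iff_coeff_eq_zero.mpr fun j hj => ?_
  obtain ⟨m, rfl⟩ : ∃ m, j = m + 1 := ⟨j - 1, by omega⟩
  rw [coeff_twoPointPoly_succ]
  rcases (Nat.lt_succ_iff.mp hj).eq_or_lt with rfl | hkm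
  · simp
  · have hkm' := Nat.lt_succ_of_lt hkm
    simp [Nat.choose_eq_zero_of_lt, hkm, hkm', hkm.ne', hkm'.ne']

lemma coeff_twoPointPoly_self (k : ℕ) : (twoPointPoly a b k).coeff k = a + b - k := by
  rcases k with _ | m
  · simp [twoPointPoly_eq]
  · rw [coeff_twoPointPoly_succ, Nat.choose_succ_self_right]
    simp

lemma det_eval_twoPointPoly (v : Fin n → R) :
    (Matrix.of fun i k : Fin n => (twoPointPoly a b k).eval (v i)).det =
      (∏ k ∈ range n, (a + b - k)) * (Matrix.vandermonde v).det := by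
  rw [Matrix.det_of_eval_of_natDegree_le v _ fun k => natDegree_twoPointPoly_le a b k,
    ← Fin.prod_univ_eq_prod_range (fun k => a + b - k)]
  simp only [coeff_twoPointPoly_self]

end VandermondeExpansion

lemma poch_pos {a : ℝ} (ha : 0 < a) (n : ℕ) : 0 < poch a n :=
  prod_pos fun k _ => by positivity

lemma poch_eq_prod_range_sub (a : ℝ) (n : ℕ) :
    poch a n = ∏ k ∈ range n, (a + n - 1 - k) := by
  rw [poch, ← prod_range_reflect]
  refine prod_congr rfl fun k hk => ?_
  rw [Nat.cast_sub (by simp at hk; omega), Nat.cast_sub (by simp at hk; omega)]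
  ring

lemma pairProd_eq_det_vandermonde {N : ℕ} (f : Fin N → ℤ) :
    pairProd f = (Matrix.vandermonde fun i => (f i : ℝ)).det := by
  rw [Matrix.det_vandermonde, pairProd, prod_filter, Fintype.prod_prod_type]
  refine prod_congr rfl fun i _ => ?_
  rw [← filter_lt_eq_Ioi, prod_filter]
  push_cast; rfl

lemma pairProd_pos {N : ℕ} {f : Fin N → ℤ} (hf : StrictMono f) : 0 < pairProd f :=
  prod_pos fun _ hp => by exact_mod_cast sub_pos.mpr (hf (mem_filter.mp hp).2)

lemma pairProd_eq_zero {N : ℕ} {f : Fin N → ℤ} {i j : Fin N} (hij : i < j) (h : f i = f j) :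
    pairProd f = 0 :=
  prod_eq_zero (i := (i, j)) (by simp [hij]) (by simp [h])

def jumpSet {N : ℕ} (X : Fin N → ℤ) : Finset (Fin N → ℤ) :=
  Fintype.piFinset fun i => {X i, X i + 1}

lemma mem_jumpSet {N : ℕ} {X Y : Fin N → ℤ} :
    Y ∈ jumpSet X ↔ ∀ i, Y i = X i ∨ Y i = X i + 1 := by
  simp [jumpSet]

section Transition

variable (N T S t : ℕ)

noncomputable def ptpWeight (x y : ℤ) : ℝ :=
  if y = x + 1 then (N : ℝ) + S - x - 1 else (x : ℝ) + T - t - S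

lemma sum_pair_ptpWeight_mul_pow (x : ℤ) (k : ℕ) :
    ∑ z ∈ ({x, x + 1} : Finset ℤ), ptpWeight N T S t x z * (z : ℝ) ^ k =
      (twoPointPoly ((T : ℝ) - t - S) ((N : ℝ) + S - 1) k).eval (x : ℝ) := by
  rw [sum_pair (by omega), eval_twoPointPoly, ptpWeight, ptpWeight, if_neg (by omega), if_pos rfl]
  push_cast
  ring

variable {N T S t} in
lemma ptpWeight_eq_zero_of_notMem_secX {x y : ℤ} (hx : x ∈ secX N T S t)
    (hy : y = x ∨ y = x + 1) (hy' : y ∉ secX N T S (t + 1)) : ptpWeight N T S t x y = 0 := by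
  simp only [secX, mem_Icc, max_le_iff, le_min_iff, not_and_or, not_le] at hx hy'
  push_cast at hy'
  rcases hy with hy | hy <;> subst y
  · have hx' : (x : ℝ) = t + S - T := by exact_mod_cast (show x = t + S - T by omega)
    rw [ptpWeight, if_neg (by omega), hx']
    ring
  · have hx' : (x : ℝ) = S + N - 1 := by exact_mod_cast (show x = S + N - 1 by omega)
    rw [ptpWeight, if_pos rfl, hx']
    ring

noncomputable def ptpNumerator (X Y : Fin N → ℤ) : ℝ :=
  pairProd Y * ∏ i, ptpWeight N T S t (X i) (Y i)

lemma Ptp_eq_ite (X Y : Fin N → ℤ) :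
    Ptp N T S t X Y = if Y ∈ jumpSet X then
      ptpNumerator N T S t X Y / (poch ((T : ℝ) - t) N * pairProd X) else 0 := by
  simp only [Ptp, mem_jumpSet]
  rfl

lemma sum_ptpNumerator (X : Fin N → ℤ) :
    ∑ Y ∈ jumpSet X, ptpNumerator N T S t X Y = poch ((T : ℝ) - t) N * pairProd X := by
  simp only [ptpNumerator, pairProd_eq_det_vandermonde, mul_comm (Matrix.det _)]
  rw [jumpSet, Matrix.sum_prod_mul_det_vandermonde]
  simp only [sum_pair_ptpWeight_mul_pow, det_eval_twoPointPoly, poch_eq_prod_range_sub]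
  congr 1
  exact prod_congr rfl fun k _ => by ring

variable {N T S t} in
lemma ptpNumerator_eq_zero {X Y : Fin N → ℤ} (hX : X ∈ Xcal N T S t) (hY : Y ∈ jumpSet X)
    (hY' : Y ∉ Xcal N T S (t + 1)) : ptpNumerator N T S t X Y = 0 := by
  rw [mem_jumpSet] at hY
  simp only [Xcal, mem_filter, Fintype.mem_piFinset, not_and_or, not_forall] at hX hY'
  rcases hY' with ⟨i, hi⟩ | ⟨i, j, hij, hji⟩
  · exact mul_eq_zero_of_right _ <|
      prod_eq_zero (mem_univ i) (ptpWeight_eq_zero_of_notMem_secX (hX.1 i) (hY i) hi)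
  · have hXij := hX.2 i j hij
    exact mul_eq_zero_of_left (pairProd_eq_zero hij (by grind)) _

end Transition

theorem Ptp_stochastic_general (N T S t : ℕ) (ht : t < T)
    (X : Fin N → ℤ) (hX : X ∈ Xcal N T S t) :
    ∑ Y ∈ Xcal N T S (t + 1), Ptp N T S t X Y = 1 := by
  have hD : 0 < poch ((T : ℝ) - t) N * pairProd X :=
    mul_pos (poch_pos (sub_pos.mpr (by exact_mod_cast ht)) N) (pairProd_pos (mem_filter.mp hX).2)
  simp only [Ptp_eq_ite, sum_ite_mem]
  rw [sum_subset inter_subset_right, ← sum_div, sum_ptpNumerator, div_self hD.ne']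
  intro Y hY hY'
  rw [ptpNumerator_eq_zero hX hY fun h => hY' (mem_inter.mpr ⟨h, hY⟩), zero_div]

/-- P^{S,t}_{t+} is stochastic: each row sums to 1. -/
theorem Ptp_stochastic (N T S t : ℕ) (hN : 1 ≤ N) (hS : S ≤ T) (ht : t < T)
    (X : Fin N → ℤ) (hX : X ∈ Xcal N T S t) :
    ∑ Y ∈ Xcal N T S (t + 1), Ptp N T S t X Y = 1 :=
  Ptp_stochastic_general N T S t ht X hX
end

section
/- The stochastic matrix P^{S,t}_{t+} admits the determinantal representation P^{S,t}_{t+}(X,Y) = [∏_{i<j}(y_j-y_i) · det[U^{S,t}_{t+}(x_i,y_j)]_{i,j=1..N}] / [(T-t)_N · ∏_{i<j}(x_j-x_i)], where U^{S,t}_{t+}(x,y) equals N+S-1-x if y=x+1, equals T-t-S+x if y=x, and 0 otherwise. -/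
/- A permutation that moves each row of a two-diagonal matrix to a nonzero entry must preserve the
order of the strictly increasing positions, hence is the identity; so the determinant is the
product of the diagonal entries, which is exactly the product appearing in `Ptp`. -/

open Finset

/-- The two-diagonal matrix U^{S,t}_{t+}. -/
noncomputable def Utp (N T S t : ℕ) (x y : ℤ) : ℝ :=
  if y = x + 1 then (N : ℝ) + S - 1 - x
  else if y = x then (T : ℝ) - t - S + x
  else 0

theorem Equiv.Perm.eq_one_of_forall_mem_Icc {ι : Type*} [LinearOrder ι] [Finite ι]
    {X Y : ι → ℤ} (hX : StrictMono X) (hY : StrictMono Y) (σ : Equiv.Perm ι)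
    (h : ∀ i, X (σ i) ≤ Y i ∧ Y i ≤ X (σ i) + 1) : σ = 1 := by
  have hσ : StrictMono σ := by
    intro i j hij
    have hle : X (σ i) ≤ X (σ j) := by linarith [h i, h j, hY hij]
    exact lt_of_le_of_ne (hX.le_iff_le.mp hle) (σ.injective.ne hij.ne)
  exact Equiv.ext fun _ => hσ.apply_eq

theorem Matrix.det_of_eq_zero_off_two_diagonals {R ι : Type*} [CommRing R] [Fintype ι]
    [DecidableEq ι] [LinearOrder ι] (f : ℤ → ℤ → R)
    (hf : ∀ x y, f x y ≠ 0 → x ≤ y ∧ y ≤ x + 1) {X Y : ι → ℤ}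
    (hX : StrictMono X) (hY : StrictMono Y) :
    (Matrix.of fun i j => f (X i) (Y j)).det = ∏ i, f (X i) (Y i) := by
  rw [Matrix.det_apply, Finset.sum_eq_single 1 _ (fun h => absurd (mem_univ _) h)]
  · simp
  intro σ _ hσ
  obtain ⟨i, hi⟩ : ∃ i, f (X (σ i)) (Y i) = 0 := by
    by_contra! hne
    exact hσ (σ.eq_one_of_forall_mem_Icc hX hY fun i => hf _ _ (hne i))
  rw [Finset.prod_eq_zero (mem_univ i) (by simpa using hi), smul_zero]

theorem Utp_ne_zero {N T S t : ℕ} {x y : ℤ} (h : Utp N T S t x y ≠ 0) : x ≤ y ∧ y ≤ x + 1 := by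
  unfold Utp at h
  split_ifs at h <;> first | omega | exact absurd rfl h

theorem Utp_of_step {N T S t : ℕ} {x y : ℤ} (h : y = x ∨ y = x + 1) :
    Utp N T S t x y = if y = x + 1 then (N : ℝ) + S - x - 1 else (x : ℝ) + T - t - S := by
  rcases h with rfl | rfl <;> simp [Utp] <;> ring

theorem Utp_of_not_step {N T S t : ℕ} {x y : ℤ} (h : ¬(y = x ∨ y = x + 1)) :
    Utp N T S t x y = 0 := by
  unfold Utp
  split_ifs <;> tauto

theorem Ptp_det_rep_general (N T S t : ℕ)
    (X Y : Fin N → ℤ) (hX : X ∈ Xcal N T S t) (hY : Y ∈ Xcal N T S (t + 1)) :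
    Ptp N T S t X Y =
      pairProd Y * Matrix.det (Matrix.of fun i j : Fin N => Utp N T S t (X i) (Y j)) /
        (poch ((T : ℝ) - t) N * pairProd X) := by
  rw [Matrix.det_of_eq_zero_off_two_diagonals _ (fun _ _ => Utp_ne_zero)
    (mem_filter.mp hX).2 (mem_filter.mp hY).2, Ptp]
  split_ifs with hstep
  · rw [prod_congr rfl fun i _ => Utp_of_step (hstep i)]
  · obtain ⟨i, hi⟩ := not_forall.mp hstep
    rw [prod_eq_zero (mem_univ i) (Utp_of_not_step hi)]
    simp

/-- Determinantal representation of P^{S,t}_{t+}. -/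
theorem Ptp_det_rep (N T S t : ℕ) (hN : 1 ≤ N) (hS : S ≤ T) (ht : t < T)
    (X Y : Fin N → ℤ) (hX : X ∈ Xcal N T S t) (hY : Y ∈ Xcal N T S (t + 1)) :
    Ptp N T S t X Y =
      pairProd Y * Matrix.det (Matrix.of fun i j : Fin N => Utp N T S t (X i) (Y j)) /
        (poch ((T : ℝ) - t) N * pairProd X) :=
  Ptp_det_rep_general N T S t X Y hX hY
end

section
/- Any square submatrix of a two-diagonal matrix (a matrix U with U(x,y) = 0 unless y = x or y = x+1) that has nonzero determinant is block-diagonal with each block triangular; consequently its determinant equals a product of suitable matrix entries. In particular, for x_1<⋯<x_N and y_1<⋯<y_N, det[U(x_i,y_j)]_{i,j=1..N} ≠ 0 implies y_i - x_i ∈ {0,1} for all i, and in that case det[U(x_i,y_j)] = ∏_{i=1}^N U(x_i,y_i). -/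
/-!
The determinant of `[U(xᵢ,yⱼ)]` is always the product of its diagonal entries: a permutation `σ`
contributes to the Leibniz expansion only if `y i - x (σ i) ∈ {0, 1}` for every `i`, and monotonicity
of `x` and `y` rules this out at the least point moved by `σ`. Both claims follow at once.
-/

open Equiv

theorem Equiv.Perm.exists_lt_apply_and_lt_inv_apply {ι : Type*} [LinearOrder ι] [WellFoundedLT ι]
    {σ : Perm ι} (hσ : σ ≠ 1) : ∃ i, i < σ i ∧ i < σ⁻¹ i := by
  have hmoved : ∃ i, σ i ≠ i := by
    by_contra! h
    exact hσ (Perm.ext h)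
  obtain ⟨i, hi, hmin⟩ := WellFounded.has_min wellFounded_lt {i | σ i ≠ i} hmoved
  have hfix : ∀ j, j < i → σ j = j := fun j hj => by
    by_contra hj'
    exact hmin j hj' hj
  refine ⟨i, ?_, ?_⟩
  · refine lt_of_le_of_ne (not_lt.mp fun hlt => hi ?_) (Ne.symm hi)
    exact σ.injective (hfix _ hlt)
  · have hinv : σ (σ⁻¹ i) = i := σ.apply_symm_apply i
    refine lt_of_le_of_ne (not_lt.mp fun hlt => ?_) fun h => hi ?_
    · exact hlt.ne ((hfix _ hlt).symm.trans hinv)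
    · rwa [← h] at hinv

theorem Equiv.Perm.eq_one_of_forall_eq_or_eq_add_one {ι : Type*} [LinearOrder ι] [WellFoundedLT ι]
    {x y : ι → ℤ} (hx : StrictMono x) (hy : StrictMono y) {σ : Perm ι}
    (hσ : ∀ i, y i = x (σ i) ∨ y i = x (σ i) + 1) : σ = 1 := by
  by_contra hne
  obtain ⟨i, hi, hi'⟩ := Perm.exists_lt_apply_and_lt_inv_apply hne
  have h₁ : x (σ i) ≤ y i := by rcases hσ i with h | h <;> omega
  have h₂ : y (σ⁻¹ i) ≤ x i + 1 := by
    have hinv : σ (σ⁻¹ i) = i := σ.apply_symm_apply i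
    rcases hσ (σ⁻¹ i) with h | h <;> rw [hinv] at h <;> omega
  have h₃ : x i < x (σ i) := hx hi
  have h₄ : y i < y (σ⁻¹ i) := hy hi'
  -- x (σ i) ≤ y i < y (σ⁻¹ i) ≤ x i + 1 ≤ x (σ i)
  omega

theorem Matrix.det_eq_prod_diag_of_forall_perm {n R : Type*} [Fintype n] [DecidableEq n]
    [CommRing R] {A : Matrix n n R} (hA : ∀ σ : Perm n, (∀ i, A (σ i) i ≠ 0) → σ = 1) :
    A.det = ∏ i, A i i := by
  rw [Matrix.det_apply', Finset.sum_eq_single (1 : Perm n)]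
  · simp
  · intro σ _ hσ
    obtain ⟨i, hi⟩ : ∃ i, A (σ i) i = 0 := by
      by_contra! h
      exact hσ (hA σ h)
    exact mul_eq_zero_of_right _ (Finset.prod_eq_zero (Finset.mem_univ i) hi)
  · exact fun h => absurd (Finset.mem_univ _) h

/-- For a two-diagonal matrix U (vanishing off the diagonals y = x and y = x+1)
and strictly increasing tuples x₁<⋯<x_N, y₁<⋯<y_N: a nonzero determinant of the
submatrix [U(xᵢ,yⱼ)] forces yᵢ - xᵢ ∈ {0,1} for all i, and in that case the
determinant is the product of the diagonal entries ∏ᵢ U(xᵢ,yᵢ). -/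
theorem twoDiagonal_det (N : ℕ) (U : ℤ → ℤ → ℝ)
    (hU : ∀ x y : ℤ, y ≠ x → y ≠ x + 1 → U x y = 0)
    (x y : Fin N → ℤ)
    (hx : ∀ i j : Fin N, i < j → x i < x j)
    (hy : ∀ i j : Fin N, i < j → y i < y j) :
    (Matrix.det (Matrix.of fun i j : Fin N => U (x i) (y j)) ≠ 0 →
      ∀ i, y i = x i ∨ y i = x i + 1) ∧
    ((∀ i, y i = x i ∨ y i = x i + 1) →
      Matrix.det (Matrix.of fun i j : Fin N => U (x i) (y j)) = ∏ i, U (x i) (y i)) := by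
  have near_diagonal : ∀ i j, U (x i) (y j) ≠ 0 → y j = x i ∨ y j = x i + 1 := by
    intro i j hij
    by_contra! h
    exact hij (hU _ _ h.1 h.2)
  have hdet : Matrix.det (Matrix.of fun i j : Fin N => U (x i) (y j)) = ∏ i, U (x i) (y i) :=
    Matrix.det_eq_prod_diag_of_forall_perm fun σ hσ =>
      Perm.eq_one_of_forall_eq_or_eq_add_one hx hy fun i => near_diagonal _ _ (hσ i)
  refine ⟨fun hne i => near_diagonal i i ?_, fun _ => hdet⟩
  rw [hdet] at hne
  exact Finset.prod_ne_zero_iff.mp hne i (Finset.mem_univ i)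
end

section
/- Within a (k,l)-block (indices i with x_i = y_i = k, k+1, …, k+l-1, isolated from other equal coordinates), the conditional law of the split point j (meaning z_i = x_i for the lowest j points of the block and z_i = x_i+1 for the remaining l-j points) under the S→S+1 update is exactly the distribution D(k+T-t-S-1, k+1, l): Prob{split at j} ∝ ∏_{a=k}^{k+j-1}(a+T-t-S-1) · ∏_{a=k+j}^{k+l-1}(a+1), i.e. ∝ (k+T-t-S-1)_j / (k+1)_j after dividing by the j-independent factor ∏_{a=k}^{k+l-1}(a+1). -/
/-!
The first factor of the weight is the Pochhammer symbol `(a)_j` with `a = k+T-t-S-1`, and the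
second is `(k+1)_l / (k+1)_j`. So the weight is `(a)_j / (k+1)_j` times the `j`-independent
factor `(k+1)_l`, which cancels when the weights are normalized.
-/

open Finset

/-- D(a,b,n){k} = [(a)_k/(b)_k] / Σ_{j=0}^n (a)_j/(b)_j. -/
noncomputable def D (a b : ℝ) (n k : ℕ) : ℝ :=
  (poch a k / poch b k) / ∑ j ∈ Finset.range (n + 1), poch a j / poch b j

/-- The weight of splitting a (k,l)-block at position j in the S→S+1 update:
∏_{a=k}^{k+j-1}(a+T-t-S-1) · ∏_{a=k+j}^{k+l-1}(a+1). -/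
noncomputable def blockWeight (T t S k : ℕ) (l j : ℕ) : ℝ :=
  (∏ m ∈ Finset.range j, ((k : ℝ) + m + T - t - S - 1)) *
    ∏ m ∈ Finset.Ico j l, ((k : ℝ) + m + 1)

lemma poch_pos_s17 {b : ℝ} (hb : 0 < b) (n : ℕ) : 0 < poch b n :=
  prod_pos fun _ _ => by positivity

lemma poch_mul_prod_Ico (b : ℝ) {j l : ℕ} (h : j ≤ l) :
    poch b j * ∏ m ∈ Ico j l, (b + m) = poch b l := by
  rw [poch, poch, range_eq_Ico, range_eq_Ico, prod_Ico_consecutive _ (Nat.zero_le j) h]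

lemma div_sum_eq_of_eq_mul {ι K : Type*} [Semifield K] {s : Finset ι} {w f : ι → K} {C : K}
    (hC : C ≠ 0) (hw : ∀ i ∈ s, w i = f i * C) {j : ι} (hj : j ∈ s) :
    w j / ∑ i ∈ s, w i = f j / ∑ i ∈ s, f i := by
  rw [sum_congr rfl hw, ← sum_mul, hw j hj, mul_div_mul_right _ _ hC]

lemma blockWeight_eq_poch_mul (T t S k l j : ℕ) :
    blockWeight T t S k l j =
      poch ((k : ℝ) + T - t - S - 1) j * ∏ m ∈ Ico j l, ((k : ℝ) + 1 + m) := by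
  unfold blockWeight poch
  congr 1 <;> exact prod_congr rfl fun _ _ => by ring

lemma blockWeight_eq_poch_div_poch_mul (T t S k : ℕ) {l j : ℕ} (hj : j ≤ l) :
    blockWeight T t S k l j =
      (poch ((k : ℝ) + T - t - S - 1) j / poch ((k : ℝ) + 1) j) *
        ∏ m ∈ range l, ((k : ℝ) + m + 1) := by
  have hprod : ∏ m ∈ range l, ((k : ℝ) + m + 1) = poch ((k : ℝ) + 1) l :=
    prod_congr rfl fun _ _ => by ring
  have hb : poch ((k : ℝ) + 1) j ≠ 0 := (poch_pos_s17 (by positivity) j).ne'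
  rw [blockWeight_eq_poch_mul, hprod, ← poch_mul_prod_Ico _ hj]
  field_simp

theorem block_split_law_general (T t S k l : ℕ) :
    ∀ j ≤ l,
      (blockWeight T t S k l j =
        (poch ((k : ℝ) + T - t - S - 1) j / poch ((k : ℝ) + 1) j) *
          ∏ m ∈ Finset.range l, ((k : ℝ) + m + 1)) ∧
      (blockWeight T t S k l j / ∑ j' ∈ Finset.range (l + 1), blockWeight T t S k l j' =
        D ((k : ℝ) + T - t - S - 1) ((k : ℝ) + 1) l j) := by
  intro j hj
  have hweight := fun i (hi : i ≤ l) => blockWeight_eq_poch_div_poch_mul T t S k hi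
  refine ⟨hweight j hj, ?_⟩
  exact div_sum_eq_of_eq_mul (prod_pos fun _ _ => by positivity).ne'
    (fun i hi => hweight i (mem_range_succ_iff.mp hi)) (mem_range_succ_iff.mpr hj)

/-- The conditional law of the split point of a (k,l)-block is exactly
D(k+T-t-S-1, k+1, l): the weight factorizes as (a)_j/(b)_j times a j-independent
factor (with a = k+T-t-S-1, b = k+1), and the normalized weights coincide with D. -/
theorem block_split_law (T t S k l : ℕ)
    (ha : (0 : ℝ) < (k : ℝ) + T - t - S - 1) :
    ∀ j ≤ l,
      (blockWeight T t S k l j =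
        (poch ((k : ℝ) + T - t - S - 1) j / poch ((k : ℝ) + 1) j) *
          ∏ m ∈ Finset.range l, ((k : ℝ) + m + 1)) ∧
      (blockWeight T t S k l j / ∑ j' ∈ Finset.range (l + 1), blockWeight T t S k l j' =
        D ((k : ℝ) + T - t - S - 1) ((k : ℝ) + 1) l j) :=
  block_split_law_general T t S k l
end
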